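/- arXiv:1112.4292 — 2 statements merged into one kernel-verified Lean document; each statement's English description precedes it below -/
import Mathlib

section
/- Let β < 1 and K : {0 < s < t} → ℝ with |K(t,s)| ≤ C/(t−s). For α ∈ ℂ with Re α > (β−1)/2, define J_α f(t) = ∫₀^{t/2} (s/t)^α K(t,s) f(s) ds for f : (0,∞) → ℝ. Then J_α is bounded on L²((0,∞), t^β dt) with norm at most C'(Re α − (β−1)/2, C) depending only on Re α − (β−1)/2 and C. -/
/-!
On the range of integration `t - s ≥ t / 2`, so with `ρ = Re α = a + (β - 1) / 2` it suffices to
bound the positive operator `g ↦ ∫₀^{t/2} (s/t)^ρ t⁻¹ g(s) ds` on `L²(t^β dt)`, which is Schur's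
test. Splitting `s^ρ = s^{(a-1)/2} s^{(a+β)/2}`, Cauchy–Schwarz in `s` gives the factor
`∫₀^{t/2} s^{a-1} ds = (t/2)^a / a`, leaving the weight `t^{-a-1}`; after exchanging the order of
integration, `∫_{2s}^∞ t^{-a-1} dt = (2s)^{-a} / a` turns `s^{a+β}` back into `s^β`. The norm is
therefore at most `2C · 2^{-a} / a`.
-/

open MeasureTheory Set
open scoped ENNReal

lemma lintegral_Ioc_zero_rpow_sub_one {b c : ℝ} (hb : 0 < b) (hc : 0 < c) :
    ∫⁻ s in Ioc 0 b, ENNReal.ofReal (s ^ (c - 1)) = ENNReal.ofReal (b ^ c / c) := by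
  rw [← ofReal_integral_eq_lintegral_ofReal, ← intervalIntegral.integral_of_le hb.le,
    integral_rpow (Or.inl (by linarith)), sub_add_cancel, Real.zero_rpow hc.ne', sub_zero]
  · exact (intervalIntegral.intervalIntegrable_rpow' (by linarith)).1
  · exact (ae_restrict_iff' measurableSet_Ioc).2
      (ae_of_all _ fun s hs => Real.rpow_nonneg hs.1.le _)

lemma lintegral_Ioi_rpow_neg_sub_one {b c : ℝ} (hb : 0 < b) (hc : 0 < c) :
    ∫⁻ t in Ioi c, ENNReal.ofReal (t ^ (-b - 1)) = ENNReal.ofReal (c ^ (-b) / b) := by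
  have hlt : -b - 1 < -1 := by linarith
  rw [← ofReal_integral_eq_lintegral_ofReal (integrableOn_Ioi_rpow_of_lt hlt hc),
    integral_Ioi_rpow_of_lt hlt hc, sub_add_cancel, neg_div_neg_eq]
  exact (ae_restrict_iff' measurableSet_Ioi).2
    (ae_of_all _ fun t ht => Real.rpow_nonneg (hc.trans ht).le _)

lemma sq_lintegral_mul_le {α : Type*} [MeasurableSpace α] (μ : Measure α) {u v : α → ℝ≥0∞}
    (hu : AEMeasurable u μ) (hv : AEMeasurable v μ) :
    (∫⁻ a, u a * v a ∂μ) ^ 2 ≤ (∫⁻ a, u a ^ 2 ∂μ) * ∫⁻ a, v a ^ 2 ∂μ := by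
  have hsq : ∀ x : ℝ≥0∞, x ^ (2 : ℝ) = x ^ 2 := fun x => by
    rw [← ENNReal.rpow_natCast]; norm_num
  have hsqrt : ∀ x : ℝ≥0∞, (x ^ (1 / 2 : ℝ)) ^ 2 = x := fun x => by
    rw [← hsq, ← ENNReal.rpow_mul]; norm_num
  calc (∫⁻ a, u a * v a ∂μ) ^ 2
      ≤ ((∫⁻ a, u a ^ (2 : ℝ) ∂μ) ^ (1 / 2 : ℝ) * (∫⁻ a, v a ^ (2 : ℝ) ∂μ) ^ (1 / 2 : ℝ)) ^ 2 :=
        pow_le_pow_left' (ENNReal.lintegral_mul_le_Lp_mul_Lq μ .two_two hu hv) 2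
    _ = (∫⁻ a, u a ^ 2 ∂μ) * ∫⁻ a, v a ^ 2 ∂μ := by
        rw [mul_pow, hsqrt, hsqrt]; simp only [hsq]

lemma lintegral_Ioi_mul_lintegral_Ioc_half {F G : ℝ → ℝ≥0∞} (hF : Measurable F)
    (hG : Measurable G) :
    ∫⁻ t in Ioi 0, G t * ∫⁻ s in Ioc 0 (t / 2), F s =
      ∫⁻ s in Ioi 0, F s * ∫⁻ t in Ici (2 * s), G t := by
  set S : Set (ℝ × ℝ) := {q | q.2 ≤ q.1 / 2}
  have hS : MeasurableSet S := measurableSet_le measurable_snd (measurable_fst.div_const 2)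
  set H := S.indicator fun q => G q.1 * F q.2
  have hH : Measurable H := ((hG.comp measurable_fst).mul (hF.comp measurable_snd)).indicator hS
  have inner_s : ∀ t, G t * ∫⁻ s in Ioc 0 (t / 2), F s = ∫⁻ s in Ioi 0, H (t, s) := fun t => by
    rw [← lintegral_const_mul _ hF, ← Ioi_inter_Iic, inter_comm,
      ← Measure.restrict_restrict measurableSet_Iic, ← lintegral_indicator measurableSet_Iic]
    rfl
  have inner_t : ∀ s ∈ Ioi (0 : ℝ), F s * ∫⁻ t in Ici (2 * s), G t = ∫⁻ t in Ioi 0, H (t, s) :=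
      fun s (hs : 0 < s) => by
    have hsub : Ici (2 * s) ⊆ Ioi 0 := fun t (ht : 2 * s ≤ t) => show 0 < t by linarith
    have hH_t : (fun t => H (t, s)) = (Ici (2 * s)).indicator fun t => G t * F s := by
      ext t
      simp only [H, S, indicator_apply, mem_ofPred_eq, mem_Ici,
        le_div_iff₀ (two_pos : (0 : ℝ) < 2), mul_comm]
    rw [hH_t, lintegral_indicator measurableSet_Ici, Measure.restrict_restrict measurableSet_Ici,
      inter_eq_left.2 hsub, ← lintegral_const_mul _ hG]
    simp only [mul_comm]
  rw [lintegral_congr inner_s,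
    lintegral_lintegral_swap (f := fun t s => H (t, s)) hH.aemeasurable,
    setLIntegral_congr_fun measurableSet_Ioi inner_t]

lemma sq_lintegral_Ioc_half_le {a β t : ℝ} (ha : 0 < a) (ht : 0 < t) {g : ℝ → ℝ≥0∞}
    (hg : Measurable g) :
    (∫⁻ s in Ioc 0 (t / 2), ENNReal.ofReal ((s / t) ^ (a + (β - 1) / 2) / t) * g s) ^ 2
        * ENNReal.ofReal (t ^ β)
      ≤ ENNReal.ofReal (2 ^ (-a) / a * t ^ (-a - 1)) *
          ∫⁻ s in Ioc 0 (t / 2), ENNReal.ofReal (s ^ (a + β)) * g s ^ 2 := by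
  have hc : 0 ≤ t ^ (-(a + (β - 1) / 2) - 1) := by positivity
  have hkernel : ∀ s, 0 < s → (s / t) ^ (a + (β - 1) / 2) / t =
      t ^ (-(a + (β - 1) / 2) - 1) * (s ^ ((a - 1) / 2) * s ^ ((a + β) / 2)) := fun s hs => by
    rw [Real.div_rpow hs.le ht.le, ← Real.rpow_add hs, Real.rpow_sub_one ht.ne',
      Real.rpow_neg ht.le]
    ring_nf
  set c := t ^ (-(a + (β - 1) / 2) - 1)
  set φ : ℝ → ℝ≥0∞ := fun s => ENNReal.ofReal (s ^ ((a - 1) / 2))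
  set ψ : ℝ → ℝ≥0∞ := fun s => ENNReal.ofReal (s ^ ((a + β) / 2)) * g s
  have hsplit : ∀ s ∈ Ioc 0 (t / 2),
      ENNReal.ofReal ((s / t) ^ (a + (β - 1) / 2) / t) * g s = ENNReal.ofReal c * (φ s * ψ s) :=
    fun s ⟨hs, _⟩ => by
      rw [hkernel s hs, ENNReal.ofReal_mul hc, ENNReal.ofReal_mul (by positivity)]
      ring
  have hφ : ∫⁻ s in Ioc 0 (t / 2), φ s ^ 2 = ENNReal.ofReal ((t / 2) ^ a / a) := by
    rw [← lintegral_Ioc_zero_rpow_sub_one (by positivity) ha]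
    refine setLIntegral_congr_fun measurableSet_Ioc fun s hs => ?_
    rw [← ENNReal.ofReal_pow (Real.rpow_nonneg hs.1.le _), ← Real.rpow_mul_natCast hs.1.le]
    ring_nf
  have hψ : ∀ s ∈ Ioc (0 : ℝ) (t / 2), ψ s ^ 2 = ENNReal.ofReal (s ^ (a + β)) * g s ^ 2 :=
    fun s hs => by
      rw [mul_pow, ← ENNReal.ofReal_pow (Real.rpow_nonneg hs.1.le _),
        ← Real.rpow_mul_natCast hs.1.le]
      ring_nf
  have hconst : c ^ 2 * t ^ β * ((t / 2) ^ a / a) = 2 ^ (-a) / a * t ^ (-a - 1) := by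
    rw [Real.div_rpow ht.le zero_le_two, ← Real.rpow_natCast, ← Real.rpow_mul ht.le,
      Real.rpow_neg zero_le_two]
    have : t ^ ((-(a + (β - 1) / 2) - 1) * (2 : ℕ)) * t ^ β * t ^ a = t ^ (-a - 1) := by
      rw [← Real.rpow_add ht, ← Real.rpow_add ht]; congr 1; push_cast; ring
    rw [← this]; field_simp
  calc (∫⁻ s in Ioc 0 (t / 2), ENNReal.ofReal ((s / t) ^ (a + (β - 1) / 2) / t) * g s) ^ 2
        * ENNReal.ofReal (t ^ β)
      = ENNReal.ofReal c ^ 2 * ENNReal.ofReal (t ^ β) *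
          (∫⁻ s in Ioc 0 (t / 2), φ s * ψ s) ^ 2 := by
        rw [setLIntegral_congr_fun measurableSet_Ioc hsplit,
          lintegral_const_mul' _ _ ENNReal.ofReal_ne_top]
        ring
    _ ≤ ENNReal.ofReal c ^ 2 * ENNReal.ofReal (t ^ β) *
          ((∫⁻ s in Ioc 0 (t / 2), φ s ^ 2) * ∫⁻ s in Ioc 0 (t / 2), ψ s ^ 2) := by
        gcongr
        exact sq_lintegral_mul_le _ (by fun_prop) (by fun_prop)
    _ = ENNReal.ofReal (2 ^ (-a) / a * t ^ (-a - 1)) *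
          ∫⁻ s in Ioc 0 (t / 2), ENNReal.ofReal (s ^ (a + β)) * g s ^ 2 := by
        rw [hφ, setLIntegral_congr_fun measurableSet_Ioc hψ, ← hconst,
          ENNReal.ofReal_mul (by positivity), ENNReal.ofReal_mul (by positivity),
          ENNReal.ofReal_pow hc]
        ring

theorem lintegral_sq_lintegral_Ioc_half_le {a β : ℝ} (ha : 0 < a) {g : ℝ → ℝ≥0∞}
    (hg : Measurable g) :
    ∫⁻ t in Ioi 0,
        (∫⁻ s in Ioc 0 (t / 2), ENNReal.ofReal ((s / t) ^ (a + (β - 1) / 2) / t) * g s) ^ 2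
          * ENNReal.ofReal (t ^ β)
      ≤ ENNReal.ofReal ((2 ^ (-a) / a) ^ 2) * ∫⁻ s in Ioi 0, g s ^ 2 * ENNReal.ofReal (s ^ β) := by
  have htail : ∀ s ∈ Ioi (0 : ℝ),
      ENNReal.ofReal (s ^ (a + β)) * g s ^ 2 *
          ∫⁻ t in Ici (2 * s), ENNReal.ofReal (2 ^ (-a) / a * t ^ (-a - 1))
        = ENNReal.ofReal ((2 ^ (-a) / a) ^ 2) * (g s ^ 2 * ENNReal.ofReal (s ^ β)) :=
      fun s (hs : 0 < s) => by
    have hpow :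
        s ^ (a + β) * (2 ^ (-a) / a * ((2 * s) ^ (-a) / a)) = (2 ^ (-a) / a) ^ 2 * s ^ β := by
      have hs_pow : s ^ (a + β) * s ^ (-a) = s ^ β := by rw [← Real.rpow_add hs]; ring_nf
      rw [Real.mul_rpow zero_le_two hs.le, ← hs_pow]
      ring
    simp_rw [ENNReal.ofReal_mul (by positivity : (0:ℝ) ≤ 2 ^ (-a) / a)]
    rw [lintegral_const_mul' _ _ ENNReal.ofReal_ne_top, ← restrict_Ioi_eq_restrict_Ici,
      lintegral_Ioi_rpow_neg_sub_one ha (by positivity), ← ENNReal.ofReal_mul (by positivity),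
      mul_right_comm, ← ENNReal.ofReal_mul (by positivity), hpow,
      ENNReal.ofReal_mul (by positivity)]
    ring
  calc _ ≤ ∫⁻ t in Ioi 0, ENNReal.ofReal (2 ^ (-a) / a * t ^ (-a - 1)) *
          ∫⁻ s in Ioc 0 (t / 2), ENNReal.ofReal (s ^ (a + β)) * g s ^ 2 :=
        setLIntegral_mono' measurableSet_Ioi fun t ht => sq_lintegral_Ioc_half_le ha ht hg
    _ = ∫⁻ s in Ioi 0, ENNReal.ofReal (s ^ (a + β)) * g s ^ 2 *
          ∫⁻ t in Ici (2 * s), ENNReal.ofReal (2 ^ (-a) / a * t ^ (-a - 1)) :=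
        lintegral_Ioi_mul_lintegral_Ioc_half (by fun_prop) (by fun_prop)
    _ = _ := by
        rw [setLIntegral_congr_fun measurableSet_Ioi htail,
          lintegral_const_mul' _ _ ENNReal.ofReal_ne_top]

lemma integral_le_of_lintegral_enorm_le {α : Type*} [MeasurableSpace α] {μ : Measure α}
    {F : α → ℝ} {M : ℝ} (hM : 0 ≤ M) (h : ∫⁻ a, ‖F a‖ₑ ∂μ ≤ ENNReal.ofReal M) :
    ∫ a, F a ∂μ ≤ M :=
  (le_abs_self _).trans <| (norm_integral_le_lintegral_norm F).trans <|
    ENNReal.toReal_le_of_le_ofReal hM (by simpa only [ofReal_norm] using h)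

lemma abs_le_two_mul_div_of_le_half {C k s t : ℝ} (hs : 0 < s) (hst : s ≤ t / 2)
    (hk : |k| ≤ C / (t - s)) : |k| ≤ 2 * C / t := by
  have hts : 0 < t - s := by linarith
  have hC : 0 ≤ C := by
    have := (abs_nonneg k).trans hk
    rwa [le_div_iff₀ hts, zero_mul] at this
  refine hk.trans ?_
  rw [div_le_div_iff₀ hts (by linarith)]
  nlinarith

lemma enorm_setIntegral_Ioc_half_le {C : ℝ} {K : ℝ → ℝ → ℝ}
    (hK : ∀ t s, 0 < s → s < t → |K t s| ≤ C / (t - s)) (α : ℂ) (f : ℝ → ℝ) (t : ℝ) :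
    ‖∫ s in Ioc 0 (t / 2), (s / t : ℂ) ^ α * K t s * f s‖ₑ ≤
      ENNReal.ofReal (2 * C) *
        ∫⁻ s in Ioc 0 (t / 2), ENNReal.ofReal ((s / t) ^ α.re / t) * ‖f s‖ₑ := by
  rw [← lintegral_const_mul' _ _ ENNReal.ofReal_ne_top]
  refine (enorm_integral_le_lintegral_enorm _).trans
    (setLIntegral_mono' measurableSet_Ioc fun s ⟨hs, hst⟩ => ?_)
  have ht : 0 < t := by linarith
  have hkernel : ‖(s / t : ℂ) ^ α * K t s‖ ≤ 2 * C * ((s / t) ^ α.re / t) := by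
    rw [norm_mul, ← Complex.ofReal_div, Complex.norm_cpow_eq_rpow_re_of_pos (div_pos hs ht),
      Complex.norm_real, Real.norm_eq_abs]
    calc (s / t) ^ α.re * |K t s| ≤ (s / t) ^ α.re * (2 * C / t) := by
          gcongr
          exact abs_le_two_mul_div_of_le_half hs hst (hK t s hs (by linarith))
      _ = 2 * C * ((s / t) ^ α.re / t) := by ring
  calc ‖(s / t : ℂ) ^ α * K t s * f s‖ₑ
        = ENNReal.ofReal ‖(s / t : ℂ) ^ α * K t s‖ * ‖f s‖ₑ := by
        rw [enorm_mul, ← ofReal_norm (f s : ℂ), Complex.norm_real, ofReal_norm, ofReal_norm]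
    _ ≤ ENNReal.ofReal (2 * C * ((s / t) ^ α.re / t)) * ‖f s‖ₑ := by gcongr
    _ = _ := by rw [ENNReal.ofReal_mul' (by positivity), mul_assoc]

lemma ofReal_setIntegral_sq_mul_rpow {f : ℝ → ℝ} {β : ℝ}
    (hf : IntegrableOn (fun s => f s ^ 2 * s ^ β) (Ioi 0)) :
    ENNReal.ofReal (∫ s in Ioi 0, f s ^ 2 * s ^ β) =
      ∫⁻ s in Ioi 0, ‖f s‖ₑ ^ 2 * ENNReal.ofReal (s ^ β) := by
  rw [ofReal_integral_eq_lintegral_ofReal hf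
    (ae_restrict_of_forall_mem measurableSet_Ioi fun s (hs : 0 < s) => by positivity)]
  refine lintegral_congr fun s => ?_
  rw [ENNReal.ofReal_mul (sq_nonneg _), ← ofReal_norm, ← ENNReal.ofReal_pow (norm_nonneg _),
    Real.norm_eq_abs, sq_abs]

/-- Boundedness of the analytic family `J_α f(t) = ∫₀^{t/2} (s/t)^α K(t,s) f(s) ds`
on `L²((0,∞), t^β dt)` for `β < 1` and `Re α > (β−1)/2`, with a constant
depending only on `Re α − (β−1)/2` and on the kernel constant `C`. -/
theorem stmt_11 :
    ∃ C' : ℝ → ℝ → ℝ,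
      ∀ (β : ℝ), β < 1 → ∀ (C : ℝ) (K : ℝ → ℝ → ℝ),
      (∀ t s, 0 < s → s < t → |K t s| ≤ C / (t - s)) →
      ∀ (α : ℂ), (β - 1) / 2 < α.re →
      ∀ f : ℝ → ℝ, Measurable f →
        IntegrableOn (fun s => (f s) ^ 2 * s ^ β) (Ioi 0) →
        ∫ t in Ioi (0:ℝ),
            ‖∫ s in Ioc (0:ℝ) (t / 2), ((s / t : ℂ)) ^ α * (K t s) * (f s)‖ ^ 2 * t ^ β
          ≤ C' (α.re - (β - 1) / 2) C * ∫ s in Ioi (0:ℝ), (f s) ^ 2 * s ^ β := by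
  refine ⟨fun a C => (2 * C) ^ 2 * (2 ^ (-a) / a) ^ 2, fun β _ C K hK α hα f hf hInt => ?_⟩
  set a := α.re - (β - 1) / 2
  have ha : 0 < a := sub_pos.2 hα
  have hC : 0 ≤ C := by
    have h21 := hK 2 1 one_pos one_lt_two
    norm_num at h21
    exact (abs_nonneg _).trans h21
  set J := fun t : ℝ => ∫ s in Ioc (0:ℝ) (t / 2), ((s / t : ℂ)) ^ α * (K t s) * (f s)
  set I := fun t : ℝ => ∫⁻ s in Ioc 0 (t / 2),
    ENNReal.ofReal ((s / t) ^ (a + (β - 1) / 2) / t) * ‖f s‖ₑ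
  have hJ : ∀ t ∈ Ioi (0 : ℝ), ‖‖J t‖ ^ 2 * t ^ β‖ₑ ≤
      ENNReal.ofReal ((2 * C) ^ 2) * (I t ^ 2 * ENNReal.ofReal (t ^ β)) := fun t (ht : 0 < t) => by
    rw [enorm_mul, enorm_pow, enorm_norm, Real.enorm_of_nonneg (by positivity),
      ENNReal.ofReal_pow (by positivity), ← mul_assoc, ← mul_pow]
    gcongr
    simpa only [J, I, a, sub_add_cancel] using enorm_setIntegral_Ioc_half_le hK α f t
  have hf_sq : 0 ≤ ∫ s in Ioi 0, f s ^ 2 * s ^ β :=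
    setIntegral_nonneg measurableSet_Ioi fun s (hs : 0 < s) => by positivity
  -- `K` need not be measurable, so the estimate is run on `∫⁻ ‖·‖ₑ`, which bounds the Bochner
  -- integral whether or not the integrand is integrable.
  refine integral_le_of_lintegral_enorm_le (by positivity) ?_
  calc ∫⁻ t in Ioi 0, ‖‖J t‖ ^ 2 * t ^ β‖ₑ
      ≤ ENNReal.ofReal ((2 * C) ^ 2) * ∫⁻ t in Ioi 0, I t ^ 2 * ENNReal.ofReal (t ^ β) := by
        rw [← lintegral_const_mul' _ _ ENNReal.ofReal_ne_top]
        exact setLIntegral_mono' measurableSet_Ioi hJ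
    _ ≤ ENNReal.ofReal ((2 * C) ^ 2) * (ENNReal.ofReal ((2 ^ (-a) / a) ^ 2) *
          ∫⁻ s in Ioi 0, ‖f s‖ₑ ^ 2 * ENNReal.ofReal (s ^ β)) := by
        gcongr
        exact lintegral_sq_lintegral_Ioc_half_le ha hf.enorm
    _ = _ := by
        rw [← ofReal_setIntegral_sq_mul_rpow hInt, ← ENNReal.ofReal_mul (by positivity),
          ← ENNReal.ofReal_mul (by positivity), mul_assoc]
end

section
/- Let a, γ, c > 0 and K > (a+γ)/2. Then for all d ≥ 0 and t > 0: ∫₀^∞ s^{a+γ−1} e^{−cs} (1 + (d/t)² s²)^{−K} ds ≤ C(a, γ, c, K) (1 + d/t)^{−a−γ}. -/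
/-!
Write `b = a + γ` and `r = d / t`. Dropping the bracket bounds the integral by
`∫₀^∞ s^{b-1} e^{-cs} ds = Γ(b) / c^b`; dropping the exponential and substituting `u = r s`
bounds it by `r^{-b} ∫₀^∞ u^{b-1} (1 + u²)^{-K} du`, which is finite because `2K > b`.
For `r ≤ 1` the first bound is at most a constant times `2^b (1 + r)^{-b}` because
`1 ≤ 2 / (1 + r)`, and for `r ≥ 1` so is the second because `1 / r ≤ 2 / (1 + r)`.
-/

open MeasureTheory Set Real

section Elementary

variable {b r : ℝ}

lemma two_rpow_mul_one_add_rpow_neg (hr : 0 ≤ r) :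
    2 ^ b * (1 + r) ^ (-b) = (2 / (1 + r)) ^ b := by
  rw [rpow_neg (by positivity), ← div_eq_mul_inv, div_rpow zero_le_two (by positivity)]

lemma one_le_two_rpow_mul_one_add_rpow_neg (hb : 0 ≤ b) (hr0 : 0 ≤ r) (hr1 : r ≤ 1) :
    1 ≤ 2 ^ b * (1 + r) ^ (-b) := by
  rw [two_rpow_mul_one_add_rpow_neg hr0]
  exact one_le_rpow ((one_le_div (by positivity)).2 (by linarith)) hb

lemma rpow_neg_le_two_rpow_mul_one_add_rpow_neg (hb : 0 ≤ b) (hr : 1 ≤ r) :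
    r ^ (-b) ≤ 2 ^ b * (1 + r) ^ (-b) := by
  have hr0 : 0 < r := by linarith
  rw [two_rpow_mul_one_add_rpow_neg hr0.le, rpow_neg hr0.le, ← inv_rpow hr0.le]
  gcongr
  rw [inv_eq_one_div, div_le_div_iff₀ hr0 (by positivity)]
  linarith

end Elementary

section Bracket

variable {b K : ℝ}

lemma integrableOn_Ioc_rpow_mul_one_add_sq_rpow_neg (hb : 0 < b) (hK : 0 ≤ K) :
    IntegrableOn (fun u : ℝ => u ^ (b - 1) * (1 + u ^ 2) ^ (-K)) (Ioc 0 1) := by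
  have hpow : IntegrableOn (fun u : ℝ => u ^ (b - 1)) (Ioc 0 1) := by
    rw [← intervalIntegrable_iff_integrableOn_Ioc_of_le zero_le_one]
    exact intervalIntegral.intervalIntegrable_rpow' (by linarith)
  refine hpow.mono' (by fun_prop) ?_
  filter_upwards [ae_restrict_mem measurableSet_Ioc] with u hu
  have hu0 : 0 < u := hu.1
  rw [norm_of_nonneg (by positivity)]
  exact mul_le_of_le_one_right (by positivity)
    (rpow_le_one_of_one_le_of_nonpos (by nlinarith) (by linarith))

lemma integrableOn_Ioi_one_rpow_mul_one_add_sq_rpow_neg (hK : 0 ≤ K) (hbK : b < 2 * K) :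
    IntegrableOn (fun u : ℝ => u ^ (b - 1) * (1 + u ^ 2) ^ (-K)) (Ioi 1) := by
  have hpow : IntegrableOn (fun u : ℝ => u ^ (b - 1 - 2 * K)) (Ioi 1) :=
    integrableOn_Ioi_rpow_of_lt (by linarith) one_pos
  refine hpow.mono' (by fun_prop) ?_
  filter_upwards [ae_restrict_mem measurableSet_Ioi] with u (hu : 1 < u)
  have hu0 : 0 < u := by linarith
  rw [norm_of_nonneg (by positivity)]
  calc u ^ (b - 1) * (1 + u ^ 2) ^ (-K)
      ≤ u ^ (b - 1) * (u ^ 2) ^ (-K) := by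
        refine mul_le_mul_of_nonneg_left ?_ (by positivity)
        exact rpow_le_rpow_of_nonpos (by positivity) (by linarith) (by linarith)
    _ = u ^ (b - 1 - 2 * K) := by
        rw [← rpow_natCast, ← rpow_mul hu0.le, ← rpow_add hu0]
        ring_nf

lemma integrableOn_rpow_mul_one_add_sq_rpow_neg (hb : 0 < b) (hbK : b < 2 * K) :
    IntegrableOn (fun u : ℝ => u ^ (b - 1) * (1 + u ^ 2) ^ (-K)) (Ioi 0) := by
  have hK : 0 ≤ K := by linarith
  rw [← Ioc_union_Ioi_eq_Ioi zero_le_one]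
  exact (integrableOn_Ioc_rpow_mul_one_add_sq_rpow_neg hb hK).union
    (integrableOn_Ioi_one_rpow_mul_one_add_sq_rpow_neg hK hbK)

lemma rpow_mul_one_add_sq_mul_sq_rpow_neg_eq {r s : ℝ} (hr : 0 < r) (hs : 0 ≤ s) :
    s ^ (b - 1) * (1 + r ^ 2 * s ^ 2) ^ (-K)
      = r ^ (1 - b) * ((r * s) ^ (b - 1) * (1 + (r * s) ^ 2) ^ (-K)) := by
  rw [mul_rpow hr.le hs, mul_pow, ← mul_assoc, ← mul_assoc, ← rpow_add hr]
  simp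

lemma integrableOn_rpow_mul_one_add_sq_mul_sq_rpow_neg {r : ℝ} (hb : 0 < b) (hbK : b < 2 * K)
    (hr : 0 < r) :
    IntegrableOn (fun s : ℝ => s ^ (b - 1) * (1 + r ^ 2 * s ^ 2) ^ (-K)) (Ioi 0) := by
  have hscaled := (integrableOn_Ioi_comp_mul_left_iff
    (fun u : ℝ => u ^ (b - 1) * (1 + u ^ 2) ^ (-K)) 0 hr).2
    (by simpa using integrableOn_rpow_mul_one_add_sq_rpow_neg hb hbK)
  refine IntegrableOn.congr_fun (hscaled.const_mul (r ^ (1 - b)))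
    (fun s hs => (rpow_mul_one_add_sq_mul_sq_rpow_neg_eq hr (le_of_lt hs)).symm) measurableSet_Ioi

lemma setIntegral_rpow_mul_one_add_sq_mul_sq_rpow_neg {r : ℝ} (hr : 0 < r) :
    ∫ s in Ioi (0 : ℝ), s ^ (b - 1) * (1 + r ^ 2 * s ^ 2) ^ (-K)
      = r ^ (-b) * ∫ u in Ioi (0 : ℝ), u ^ (b - 1) * (1 + u ^ 2) ^ (-K) := by
  rw [setIntegral_congr_fun measurableSet_Ioi
      (fun s hs => rpow_mul_one_add_sq_mul_sq_rpow_neg_eq hr (le_of_lt hs)),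
    integral_const_mul, integral_comp_mul_left_Ioi (fun u => u ^ (b - 1) * (1 + u ^ 2) ^ (-K)) _ hr,
    mul_zero, smul_eq_mul, ← mul_assoc, ← rpow_neg_one, ← rpow_add hr]
  ring_nf

end Bracket

noncomputable def decayIntegral (b c K r : ℝ) : ℝ :=
  ∫ s in Ioi (0 : ℝ), s ^ (b - 1) * exp (-c * s) * (1 + r ^ 2 * s ^ 2) ^ (-K)

section DecayIntegral

variable {b c K r : ℝ}

lemma decayIntegral_le_Gamma (hb : 0 < b) (hc : 0 < c) (hK : 0 ≤ K) :
    decayIntegral b c K r ≤ (1 / c) ^ b * Gamma b := by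
  rw [← integral_rpow_mul_exp_neg_mul_Ioi hb hc]
  have hgamma : IntegrableOn (fun s : ℝ => s ^ (b - 1) * exp (-(c * s))) (Ioi 0) := by
    simpa using integrableOn_rpow_mul_exp_neg_mul_rpow (s := b - 1) (by linarith) one_pos hc
  refine setIntegral_mono_of_nonneg (fun s (hs : 0 < s) => by positivity)
    (fun s (hs : 0 < s) => ?_) hgamma
  rw [neg_mul]
  exact mul_le_of_le_one_right (by positivity)
    (rpow_le_one_of_one_le_of_nonpos (by nlinarith [sq_nonneg (r * s)]) (by linarith))

lemma decayIntegral_le_rpow_neg (hb : 0 < b) (hc : 0 ≤ c) (hbK : b < 2 * K) (hr : 0 < r) :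
    decayIntegral b c K r ≤
      r ^ (-b) * ∫ u in Ioi (0 : ℝ), u ^ (b - 1) * (1 + u ^ 2) ^ (-K) := by
  rw [← setIntegral_rpow_mul_one_add_sq_mul_sq_rpow_neg hr]
  refine setIntegral_mono_of_nonneg (fun s (hs : 0 < s) => by positivity)
    (fun s (hs : 0 < s) => ?_) (integrableOn_rpow_mul_one_add_sq_mul_sq_rpow_neg hb hbK hr)
  gcongr
  exact mul_le_of_le_one_right (by positivity) (exp_le_one_iff.2 (by nlinarith))

lemma decayIntegral_le (hb : 0 < b) (hc : 0 < c) (hbK : b < 2 * K) (hr : 0 ≤ r) :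
    decayIntegral b c K r ≤ 2 ^ b * max ((1 / c) ^ b * Gamma b)
      (∫ u in Ioi (0 : ℝ), u ^ (b - 1) * (1 + u ^ 2) ^ (-K)) * (1 + r) ^ (-b) := by
  set M := max ((1 / c) ^ b * Gamma b) (∫ u in Ioi (0 : ℝ), u ^ (b - 1) * (1 + u ^ 2) ^ (-K))
  have hM : 0 ≤ M := le_max_of_le_left (by positivity)
  rcases le_or_gt r 1 with hr1 | hr1
  · calc decayIntegral b c K r ≤ (1 / c) ^ b * Gamma b :=
          decayIntegral_le_Gamma hb hc (by linarith)
      _ ≤ M * 1 := by rw [mul_one]; exact le_max_left _ _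
      _ ≤ M * (2 ^ b * (1 + r) ^ (-b)) :=
          mul_le_mul_of_nonneg_left (one_le_two_rpow_mul_one_add_rpow_neg hb.le hr hr1) hM
      _ = _ := by ring
  · calc decayIntegral b c K r
          ≤ r ^ (-b) * ∫ u in Ioi (0 : ℝ), u ^ (b - 1) * (1 + u ^ 2) ^ (-K) :=
          decayIntegral_le_rpow_neg hb hc.le hbK (by linarith)
      _ ≤ r ^ (-b) * M := by gcongr; exact le_max_right _ _
      _ ≤ (2 ^ b * (1 + r) ^ (-b)) * M := by
          gcongr; exact rpow_neg_le_two_rpow_mul_one_add_rpow_neg hb.le hr1.le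
      _ = _ := by ring

end DecayIntegral

/-- `m = 1` case of the contour-integral estimate: for `a, γ, c > 0` and
`K > (a+γ)/2`, uniformly in `d ≥ 0` and `t > 0`,
`∫₀^∞ s^{a+γ−1} e^{−cs} (1 + (d/t)² s²)^{−K} ds ≤ C (1 + d/t)^{−a−γ}`. -/
theorem stmt_18 (a γ c K : ℝ) (ha : 0 < a) (hγ : 0 < γ) (hc : 0 < c)
    (hK : (a + γ) / 2 < K) :
    ∃ C : ℝ, 0 < C ∧ ∀ d t : ℝ, 0 ≤ d → 0 < t →
      ∫ s in Ioi (0:ℝ),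
          s ^ (a + γ - 1) * Real.exp (-c * s) * (1 + (d / t) ^ 2 * s ^ 2) ^ (-K)
        ≤ C * (1 + d / t) ^ (-(a + γ)) := by
  have hb : 0 < a + γ := by linarith
  refine ⟨2 ^ (a + γ) * max ((1 / c) ^ (a + γ) * Gamma (a + γ))
      (∫ u in Ioi (0 : ℝ), u ^ (a + γ - 1) * (1 + u ^ 2) ^ (-K)), ?_, fun d t hd ht => ?_⟩
  · exact mul_pos (by positivity) (lt_max_of_lt_left (by positivity))
  · exact decayIntegral_le hb hc (by linarith) (div_nonneg hd ht.le)
end
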